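/- arXiv:2511.22391 — 6 statements merged into one kernel-verified Lean document; each statement's English description precedes it below -/
import Mathlib

section
/- If two pointed simplicial models C,F and D,G are bisimilar (i.e., some bisimulation Z between C and D relates F and G), then they are logically equivalent: for every sentence α of the language L, C,F ⊩ α if and only if D,G ⊩ α. -/
namespace SimplicialEpistemic

/-! ## Syntax -/

inductive Formula (Ag Xv Pr : Type) : Type
  | atom : Pr → Xv → Formula Ag Xv Pr
  | top : Formula Ag Xv Pr
  | neg : Formula Ag Xv Pr → Formula Ag Xv Pr
  | and : Formula Ag Xv Pr → Formula Ag Xv Pr → Formula Ag Xv Pr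
  | assign : Xv → Ag → Formula Ag Xv Pr → Formula Ag Xv Pr
  | know : Finset Xv → Formula Ag Xv Pr → Formula Ag Xv Pr

namespace Formula

variable {Ag Xv Pr : Type} [DecidableEq Xv]

/-- Free variables of a formula. -/
def FV : Formula Ag Xv Pr → Finset Xv
  | .atom _ x => {x}
  | .top => ∅
  | .neg φ => FV φ
  | .and φ ψ => FV φ ∪ FV ψ
  | .assign x _ φ => FV φ \ {x}
  | .know Xs _ => Xs

/-- Well-formedness: in `K_X α`, the formula `α` must have no free variables.
The language `L` consists of the well-formed formulas. -/
def Wf : Formula Ag Xv Pr → Prop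
  | .atom _ _ => True
  | .top => True
  | .neg φ => Wf φ
  | .and φ ψ => Wf φ ∧ Wf ψ
  | .assign _ _ φ => Wf φ
  | .know _ α => Wf α ∧ FV α = ∅

/-- A sentence is a well-formed formula with no free variables. -/
def Sent (φ : Formula Ag Xv Pr) : Prop := Wf φ ∧ FV φ = ∅

/-- Implication `φ → ψ`, defined as `¬(φ ∧ ¬ψ)`. -/
def impl (φ ψ : Formula Ag Xv Pr) : Formula Ag Xv Pr := .neg (.and φ (.neg ψ))

/-- Biconditional `φ ↔ ψ`. -/
def fiff (φ ψ : Formula Ag Xv Pr) : Formula Ag Xv Pr := .and (impl φ ψ) (impl ψ φ)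

/-- Disjunction `φ ∨ ψ`, defined as `¬(¬φ ∧ ¬ψ)`. -/
def fdisj (φ ψ : Formula Ag Xv Pr) : Formula Ag Xv Pr := .neg (.and (.neg φ) (.neg ψ))

/-- Falsum `⊥ := ¬⊤`. -/
def fbot : Formula Ag Xv Pr := .neg .top

/-- The dual assignment operator `⟨x:=a⟩φ := ¬[x:=a]¬φ`. -/
def dia (x : Xv) (a : Ag) (φ : Formula Ag Xv Pr) : Formula Ag Xv Pr :=
  .neg (.assign x a (.neg φ))

/-- Finite conjunction of a list of formulas. -/
def bigAnd : List (Formula Ag Xv Pr) → Formula Ag Xv Pr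
  | [] => .top
  | φ :: l => .and φ (bigAnd l)

/-- Iterated assignment `[x⃗:=a⃗]φ`. -/
def assigns : List Xv → List Ag → Formula Ag Xv Pr → Formula Ag Xv Pr
  | x :: xs, a :: as, φ => .assign x a (assigns xs as φ)
  | _, _, φ => φ

/-- Substitution `φ[y/x]` of `y` for all free occurrences of `x` in `φ`. -/
def subst (x y : Xv) : Formula Ag Xv Pr → Formula Ag Xv Pr
  | .atom p z => .atom p (if z = x then y else z)
  | .top => .top
  | .neg φ => .neg (subst x y φ)
  | .and φ ψ => .and (subst x y φ) (subst x y ψ)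
  | .assign z a φ => if z = x then .assign z a φ else .assign z a (subst x y φ)
  | .know Xs α => .know (Xs.image fun z => if z = x then y else z) α

/-- Admissibility of `φ[y/x]`: `x` has no free occurrence in `φ` within the scope
of `[y:=b]` for any `b`. -/
def Adm (x y : Xv) : Formula Ag Xv Pr → Prop
  | .atom _ _ => True
  | .top => True
  | .neg φ => Adm x y φ
  | .and φ ψ => Adm x y φ ∧ Adm x y ψ
  | .assign z _ φ => z = x ∨ x ∉ FV φ ∨ (z ≠ y ∧ Adm x y φ)
  | .know _ _ => True

/-- `occurs y φ`: the variable `y` occurs (free or bound) in `φ`. -/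
def occurs (y : Xv) : Formula Ag Xv Pr → Prop
  | .atom _ z => z = y
  | .top => False
  | .neg φ => occurs y φ
  | .and φ ψ => occurs y φ ∨ occurs y ψ
  | .assign z _ φ => z = y ∨ occurs y φ
  | .know Xs α => y ∈ Xs ∨ occurs y α

/-- Propositional evaluation, treating atoms, assignment formulas and knowledge
formulas as propositional atoms. -/
def propEval (v : Formula Ag Xv Pr → Bool) : Formula Ag Xv Pr → Bool
  | .atom p x => v (.atom p x)
  | .top => true
  | .neg φ => !(propEval v φ)
  | .and φ ψ => propEval v φ && propEval v ψ
  | .assign x a φ => v (.assign x a φ)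
  | .know Xs α => v (.know Xs α)

/-- `φ` is a propositional tautology. -/
def Tautology (φ : Formula Ag Xv Pr) : Prop := ∀ v, propEval v φ = true

end Formula

/-! ## Simplicial models and their semantics -/

structure SimpModel (Ag Pr : Type) : Type 1 where
  V : Type
  faces : Set (Set V)
  χ : V → Ag
  ℓ : Pr → Set V

namespace SimpModel

variable {Ag Pr : Type}

/-- The facets: faces contained in no other face. -/
def facets (C : SimpModel Ag Pr) : Set (Set C.V) :=
  {F | F ∈ C.faces ∧ ∀ G ∈ C.faces, F ⊆ G → F = G}

/-- The conditions for being a genuine simplicial model. -/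
def IsModel (C : SimpModel Ag Pr) : Prop :=
  Nonempty C.V ∧ (∅ : Set C.V) ∉ C.faces ∧
    (∀ Y F : Set C.V, Y.Nonempty → Y ⊆ F → F ∈ C.faces → Y ∈ C.faces) ∧
    (∀ v : C.V, {v} ∈ C.faces) ∧
    (∀ F ∈ C.faces, Set.InjOn C.χ F)

end SimpModel

/-! ## First-order Kripke models and their semantics -/

structure KModel (Ag Pr : Type) : Type 1 where
  W : Type
  δ : W → Set Ag
  R : Ag → W → W → Prop
  ρ : Pr → W → Set Ag

namespace KModel

variable {Ag Pr : Type}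

/-- The conditions for being a genuine first-order Kripke model. -/
def IsModel (M : KModel Ag Pr) : Prop :=
  Nonempty M.W ∧ (∀ w : M.W, (M.δ w).Nonempty) ∧
    (∀ (a : Ag) (w v : M.W), M.R a w v → a ∈ M.δ w) ∧
    (∀ (p : Pr) (w : M.W), M.ρ p w ⊆ M.δ w)

end KModel

variable {Ag Xv Pr : Type}

/-- Simplicial satisfaction `C, F, σ ⊩ φ`. -/
def SSat [DecidableEq Xv] (C : SimpModel Ag Pr) :
    Formula Ag Xv Pr → Set C.V → (Xv → Ag) → Prop
  | .atom p x, F, σ => σ x ∈ C.χ '' (F ∩ C.ℓ p)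
  | .top, _, _ => True
  | .neg φ, F, σ => ¬ SSat C φ F σ
  | .and φ ψ, F, σ => SSat C φ F σ ∧ SSat C ψ F σ
  | .assign x a φ, F, σ => a ∈ C.χ '' F → SSat C φ F (Function.update σ x a)
  | .know Xs α, F, σ =>
      ∀ G ∈ C.facets, (∀ x ∈ Xs, σ x ∈ C.χ '' (F ∩ G)) → SSat C α G σ

/-- Kripke satisfaction `M, w, σ ⊨ φ`. -/
def KSat [DecidableEq Xv] (M : KModel Ag Pr) :
    Formula Ag Xv Pr → M.W → (Xv → Ag) → Prop
  | .atom p x, w, σ => σ x ∈ M.ρ p w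
  | .top, _, _ => True
  | .neg φ, w, σ => ¬ KSat M φ w σ
  | .and φ ψ, w, σ => KSat M φ w σ ∧ KSat M ψ w σ
  | .assign x a φ, w, σ => a ∈ M.δ w → KSat M φ w (Function.update σ x a)
  | .know Xs α, w, σ => ∀ v : M.W, (∀ x ∈ Xs, M.R (σ x) w v) → KSat M α v σ

/-! ## Bisimulations -/

/-- Bisimulation between simplicial models. -/
def IsSBisim (C D : SimpModel Ag Pr) (Z : Set (Set C.V × Set D.V)) : Prop :=
  (∀ q ∈ Z, q.1 ∈ C.facets ∧ q.2 ∈ D.facets) ∧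
    ∀ F G, (F, G) ∈ Z →
      (C.χ '' F = D.χ '' G ∧ ∀ p : Pr, C.χ '' (F ∩ C.ℓ p) = D.χ '' (G ∩ D.ℓ p)) ∧
      (∀ (As : Set Ag) (F' : Set C.V), F' ∈ C.facets → As ⊆ C.χ '' (F ∩ F') →
        ∃ G' ∈ D.facets, As ⊆ D.χ '' (G ∩ G') ∧ (F', G') ∈ Z) ∧
      (∀ (As : Set Ag) (G' : Set D.V), G' ∈ D.facets → As ⊆ D.χ '' (G ∩ G') →
        ∃ F' ∈ C.facets, As ⊆ C.χ '' (F ∩ F') ∧ (F', G') ∈ Z)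

/-- Bisimulation between first-order Kripke models. -/
def IsKBisim (M N : KModel Ag Pr) (Z : Set (M.W × N.W)) : Prop :=
  ∀ w v, (w, v) ∈ Z →
    (M.δ w = N.δ v ∧ ∀ p : Pr, M.ρ p w = N.ρ p v) ∧
    (∀ (As : Set Ag) (w' : M.W), (∀ a ∈ As, M.R a w w') →
      ∃ v' : N.W, (∀ a ∈ As, N.R a v v') ∧ (w', v') ∈ Z) ∧
    (∀ (As : Set Ag) (v' : N.W), (∀ a ∈ As, N.R a v v') →
      ∃ w' : M.W, (∀ a ∈ As, M.R a w w') ∧ (w', v') ∈ Z)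

/-! ## Local epistemic models -/

/-- (Local S5): the restriction of `R_a` to `{w | a ∈ δ(w)}` is an equivalence relation. -/
def LocalS5 (M : KModel Ag Pr) : Prop :=
  ∀ a : Ag, Equivalence (fun w v : {w : M.W // a ∈ M.δ w} => M.R a w.1 v.1)

/-- (Individually Increasing Domain). -/
def IndInc (M : KModel Ag Pr) : Prop :=
  ∀ (a : Ag) (w v : M.W), a ∈ M.δ w → M.R a w v → a ∈ M.δ v

/-- (Local Predicates). -/
def LocalPred (M : KModel Ag Pr) : Prop :=
  ∀ (p : Pr) (a : Ag) (w v : M.W), a ∈ M.ρ p w → M.R a w v → a ∈ M.ρ p v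

/-- (Collectively Decreasing Domain). -/
def CollDec (M : KModel Ag Pr) : Prop :=
  ∀ w v : M.W, (∀ a ∈ M.δ w, M.R a w v) → M.δ v ⊆ M.δ w

/-- A local epistemic model. -/
def IsLEM (M : KModel Ag Pr) : Prop :=
  LocalS5 M ∧ IndInc M ∧ LocalPred M ∧ CollDec M

/-- (Properness): `⋂_{a ∈ δ(w)} R_a(w) = {w}` for every `w`. -/
def Proper (M : KModel Ag Pr) : Prop :=
  ∀ w : M.W, {v : M.W | ∀ a ∈ M.δ w, M.R a w v} = {w}

/-! ## Properization -/

/-- `[w]_δ = ⋂_{a ∈ δ(w)} R_a(w)`. -/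
def cell (M : KModel Ag Pr) (w : M.W) : Set M.W := {v | ∀ a ∈ M.δ w, M.R a w v}

/-- The properization `M^pr` of a Kripke model. -/
noncomputable def properize (M : KModel Ag Pr) : KModel Ag Pr where
  W := {S : Set M.W // ∃ w : M.W, S = cell M w}
  δ := fun S => M.δ S.2.choose
  R := fun a S T => ∃ w v : M.W, S.1 = cell M w ∧ T.1 = cell M v ∧ M.R a w v
  ρ := fun p S => M.ρ p S.2.choose

/-! ## The maps LEM and SC -/

/-- `LEM(C)`: the first-order Kripke model associated to a simplicial model. -/
def LEMof (C : SimpModel Ag Pr) : KModel Ag Pr where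
  W := {F : Set C.V // F ∈ C.facets}
  δ := fun F => C.χ '' F.1
  R := fun a F G => a ∈ C.χ '' (F.1 ∩ G.1)
  ρ := fun p F => C.χ '' (F.1 ∩ C.ℓ p)

/-- Vertices of `SC(M)`: pairs `(a, [w]_a)` with `a ∈ δ(w)`, `[w]_a = R_a(w)`. -/
abbrev SCVert (M : KModel Ag Pr) : Type :=
  {u : Ag × Set M.W // ∃ w : M.W, u.1 ∈ M.δ w ∧ u.2 = {v : M.W | M.R u.1 w v}}

/-- `F^M_w = {(a, [w]_a) | a ∈ δ(w)}`. -/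
def SCface (M : KModel Ag Pr) (w : M.W) : Set (SCVert M) :=
  {u | u.1.1 ∈ M.δ w ∧ u.1.2 = {v : M.W | M.R u.1.1 w v}}

/-- `SC(M)`: the simplicial model associated to a Kripke model. -/
def SCof (M : KModel Ag Pr) : SimpModel Ag Pr where
  V := SCVert M
  faces := {F : Set (SCVert M) | F.Nonempty ∧ ∃ w : M.W, F ⊆ SCface M w}
  χ := fun u => u.1.1
  ℓ := fun p => {u | ∃ w : M.W, u.1.1 ∈ M.ρ p w ∧ u.1.2 = {v : M.W | M.R u.1.1 w v}}

/-! ## Isomorphisms -/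

/-- Isomorphism of first-order Kripke models. -/
structure KIso (M N : KModel Ag Pr) where
  toEquiv : M.W ≃ N.W
  δ_eq : ∀ w : M.W, N.δ (toEquiv w) = M.δ w
  R_iff : ∀ (a : Ag) (w v : M.W), N.R a (toEquiv w) (toEquiv v) ↔ M.R a w v
  ρ_eq : ∀ (p : Pr) (w : M.W), N.ρ p (toEquiv w) = M.ρ p w

/-- Isomorphism of simplicial models. -/
structure SIso (C D : SimpModel Ag Pr) where
  toEquiv : C.V ≃ D.V
  face_iff : ∀ F : Set C.V, F ∈ C.faces ↔ (toEquiv '' F) ∈ D.faces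
  χ_eq : ∀ v : C.V, D.χ (toEquiv v) = C.χ v
  ℓ_iff : ∀ (p : Pr) (v : C.V), toEquiv v ∈ D.ℓ p ↔ v ∈ C.ℓ p

/-! ## The proof system LEL -/

/-- The axiom system `LEL` (over the well-formed fragment of the language). -/
inductive LEL [DecidableEq Xv] : Formula Ag Xv Pr → Prop
  | taut {φ} : Formula.Wf φ → Formula.Tautology φ → LEL φ
  | kk {Xs : Finset Xv} {α β} : Formula.Sent α → Formula.Sent β →
      LEL (Formula.impl (.know Xs (Formula.impl α β))
        (Formula.impl (.know Xs α) (.know Xs β)))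
  | mono {Xs Ys : Finset Xv} {α} : Xs ⊆ Ys → Formula.Sent α →
      LEL (Formula.impl (.know Xs α) (.know Ys α))
  | kasgn {x : Xv} {a : Ag} {φ ψ} : Formula.Wf φ → Formula.Wf ψ →
      LEL (Formula.impl (.assign x a (Formula.impl φ ψ))
        (Formula.impl (.assign x a φ) (.assign x a ψ)))
  | det {x : Xv} {a : Ag} {φ} : Formula.Wf φ →
      LEL (Formula.impl (Formula.dia x a φ) (.assign x a φ))
  | tr {x : Xv} {a : Ag} {φ} : Formula.Wf φ → x ∉ Formula.FV φ →
      LEL (Formula.impl φ (.assign x a φ))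
  | sub {x y : Xv} {a : Ag} {φ} : Formula.Wf φ → Formula.Adm x y φ →
      LEL (.assign y a (Formula.impl (.assign x a φ) (Formula.subst x y φ)))
  | com {x y : Xv} {a b : Ag} {φ} : Formula.Wf φ → x ≠ y →
      LEL (Formula.impl (.assign x a (.assign y b φ)) (.assign y b (.assign x a φ)))
  | ui {x : Xv} {φ} (l : List Ag) : Formula.Wf φ → l.Nodup → (∀ a : Ag, a ∈ l) →
      LEL (Formula.impl (Formula.bigAnd (l.map fun a => .assign x a φ)) φ)
  | tK {Xs : Finset Xv} {α} : Formula.Sent α → LEL (Formula.impl (.know Xs α) α)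
  | kni {xs : List Xv} {as : List Ag} {α} :
      Formula.Sent α → xs.Nodup → xs.length = as.length →
      LEL (Formula.assigns xs as (Formula.impl (.neg (.know xs.toFinset α))
        (.know xs.toFinset (Formula.assigns xs as (.neg (.know xs.toFinset α))))))
  | epi {x : Xv} {a : Ag} : LEL (.assign x a (.know {x} (Formula.dia x a .top)))
  | api {x : Xv} {a : Ag} {p : Pr} :
      LEL (.assign x a (Formula.impl (.atom p x) (.know {x} (.assign x a (.atom p x)))))
  | eni {xs : List Xv} {as : List Ag} {z : Xv} (l : List Ag) :
      xs.Nodup → xs.length = as.length → l.Nodup → (∀ b : Ag, b ∈ l ↔ b ∉ as) →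
      LEL (Formula.assigns xs as
        (Formula.impl (Formula.bigAnd (l.map fun b => .assign z b Formula.fbot))
          (.know xs.toFinset (Formula.bigAnd (l.map fun b => .assign z b Formula.fbot)))))
  | mp {φ ψ} : LEL (Formula.impl φ ψ) → LEL φ → LEL ψ
  | necK {α} : Formula.Sent α → LEL α → LEL (.know ∅ α)
  | necA {x : Xv} {a : Ag} {φ} : LEL φ → LEL (.assign x a φ)

/-- `Γ` is consistent in `LEL`: no finite subset has a provably false conjunction. -/
def Consistent [DecidableEq Xv] (Γ : Set (Formula Ag Xv Pr)) : Prop :=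
  ¬ ∃ l : List (Formula Ag Xv Pr), (∀ φ ∈ l, φ ∈ Γ) ∧ LEL (.neg (Formula.bigAnd l))

end SimplicialEpistemic

namespace SimplicialEpistemic


theorem sbisim_key {Ag Xv Pr : Type} [DecidableEq Xv]
    (C D : SimpModel Ag Pr) (Z : Set (Set C.V × Set D.V)) (hZ : IsSBisim C D Z) :
    ∀ (α : Formula Ag Xv Pr) (F : Set C.V) (G : Set D.V) (σ : Xv → Ag),
      (F, G) ∈ Z → (SSat C α F σ ↔ SSat D α G σ) := by
  intro α
  induction α with
  | atom p x =>
    intro F G σ h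
    simp only [SSat]
    rw [((hZ.2 F G h).1).2 p]
  | top => intro F G σ h; simp [SSat]
  | neg φ ih => intro F G σ h; simp only [SSat]; rw [ih F G σ h]
  | and φ ψ ih1 ih2 => intro F G σ h; simp only [SSat]; rw [ih1 F G σ h, ih2 F G σ h]
  | assign x a φ ih =>
    intro F G σ h
    simp only [SSat]
    rw [((hZ.2 F G h).1).1, ih F G _ h]
  | know Xs α ih =>
    intro F G σ h
    simp only [SSat]
    constructor
    · intro hs G' hG' hcond
      obtain ⟨F', hF', hsub, hZ'⟩ := ((hZ.2 F G h).2).2 {a | ∃ x ∈ Xs, σ x = a} G' hG'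
        (by rintro a ⟨x, hx, rfl⟩; exact hcond x hx)
      exact (ih F' G' σ hZ').mp (hs F' hF' fun x hx => hsub ⟨x, hx, rfl⟩)
    · intro hs F' hF' hcond
      obtain ⟨G', hG', hsub, hZ'⟩ := ((hZ.2 F G h).2).1 {a | ∃ x ∈ Xs, σ x = a} F' hF'
        (by rintro a ⟨x, hx, rfl⟩; exact hcond x hx)
      exact (ih F' G' σ hZ').mpr (hs G' hG' fun x hx => hsub ⟨x, hx, rfl⟩)

/-- bisimilar pointed simplicial models are logically equivalent. -/
theorem simplicial_bisim_implies_logical_equiv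
    {Ag Xv Pr : Type} [Fintype Ag] [Nonempty Ag] [DecidableEq Ag]
    [DecidableEq Xv] [Countable Xv] [Infinite Xv] [Countable Pr]
    (C D : SimpModel Ag Pr) (hC : C.IsModel) (hD : D.IsModel)
    (F : Set C.V) (G : Set D.V) (hF : F ∈ C.facets) (hG : G ∈ D.facets)
    (Z : Set (Set C.V × Set D.V)) (hZ : IsSBisim C D Z) (hFG : (F, G) ∈ Z)
    (α : Formula Ag Xv Pr) (hα : Formula.Sent α) :
    (∀ σ : Xv → Ag, SSat C α F σ) ↔ (∀ σ : Xv → Ag, SSat D α G σ) := by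
  constructor
  · intro h σ; exact (sbisim_key C D Z hZ α F G σ hFG).mp (h σ)
  · intro h σ; exact (sbisim_key C D Z hZ α F G σ hFG).mpr (h σ)

end SimplicialEpistemic
end

section
/- If two pointed first-order Kripke models M,w and N,v are bisimilar (i.e., some bisimulation Z between M and N relates w and v), then they are logically equivalent: for every sentence α of the language L, M,w ⊨ α if and only if N,v ⊨ α. -/
namespace SimplicialEpistemic

theorem kbisim_ksat_iff {Ag Xv Pr : Type} [DecidableEq Xv]
    {M N : KModel Ag Pr} {Z : Set (M.W × N.W)} (hZ : IsKBisim M N Z)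
    (φ : Formula Ag Xv Pr) :
    ∀ (w : M.W) (v : N.W), (w, v) ∈ Z → ∀ σ : Xv → Ag,
      (KSat M φ w σ ↔ KSat N φ v σ) := by
  induction φ with
  | atom p x =>
    intro w v hwv σ
    simp only [KSat, ((hZ w v hwv).1.2 p)]
  | top => intro w v hwv σ; simp [KSat]
  | neg φ ih => intro w v hwv σ; simp only [KSat]; rw [ih w v hwv σ]
  | and φ ψ ih1 ih2 =>
    intro w v hwv σ; simp only [KSat]; rw [ih1 w v hwv σ, ih2 w v hwv σ]
  | assign x a φ ih =>
    intro w v hwv σ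
    simp only [KSat, (hZ w v hwv).1.1]
    exact imp_congr Iff.rfl (ih w v hwv _)
  | know Xs α ih =>
    intro w v hwv σ
    obtain ⟨_, hzig, hzag⟩ := hZ w v hwv
    simp only [KSat]
    constructor
    · intro h v' hv'
      obtain ⟨w', hw', hw'v'⟩ :=
        hzag {a | ∃ x ∈ Xs, σ x = a} v' (fun a ⟨x, hx, hxa⟩ => hxa ▸ hv' x hx)
      exact (ih w' v' hw'v' σ).mp (h w' fun x hx => hw' (σ x) ⟨x, hx, rfl⟩)
    · intro h w' hw'
      obtain ⟨v', hv', hw'v'⟩ :=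
        hzig {a | ∃ x ∈ Xs, σ x = a} w' (fun a ⟨x, hx, hxa⟩ => hxa ▸ hw' x hx)
      exact (ih w' v' hw'v' σ).mpr (h v' fun x hx => hv' (σ x) ⟨x, hx, rfl⟩)

/-- bisimilar pointed first-order Kripke models are logically equivalent. -/
theorem kripke_bisim_implies_logical_equiv
    {Ag Xv Pr : Type} [Fintype Ag] [Nonempty Ag] [DecidableEq Ag]
    [DecidableEq Xv] [Countable Xv] [Infinite Xv] [Countable Pr]
    (M N : KModel Ag Pr) (hM : M.IsModel) (hN : N.IsModel)
    (w : M.W) (v : N.W)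
    (Z : Set (M.W × N.W)) (hZ : IsKBisim M N Z) (hwv : (w, v) ∈ Z)
    (α : Formula Ag Xv Pr) (hα : Formula.Sent α) :
    (∀ σ : Xv → Ag, KSat M α w σ) ↔ (∀ σ : Xv → Ag, KSat N α v σ) := by
  exact forall_congr' fun σ => kbisim_ksat_iff hZ α w v hwv σ

end SimplicialEpistemic
end

section
/- For saturated simplicial models, bisimilarity coincides with logical equivalence: if C and D are saturated simplicial models, F a facet of C and G a facet of D, then C,F and D,G are bisimilar if and only if they satisfy exactly the same sentences of L. -/
namespace SimplicialEpistemic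

/-- A saturated simplicial model. -/
def SSaturated (Xv : Type) [DecidableEq Xv] {Ag Pr : Type} (C : SimpModel Ag Pr) : Prop :=
  ∀ (As : Set Ag) (F : Set C.V), F ∈ C.facets →
    ∀ Δ : Set (Formula Ag Xv Pr), (∀ α ∈ Δ, Formula.Sent α) →
      (∀ Δ₀ ⊆ Δ, Δ₀.Finite →
          ∃ G ∈ C.facets, As ⊆ C.χ '' (F ∩ G) ∧ ∀ α ∈ Δ₀, ∀ σ : Xv → Ag, SSat C α G σ) →
      ∃ G ∈ C.facets, As ⊆ C.χ '' (F ∩ G) ∧ ∀ α ∈ Δ, ∀ σ : Xv → Ag, SSat C α G σ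

/-!
Bisimilar facets satisfy the same formulas under every assignment, by induction on formulas.
Conversely, on saturated models equality of theories is itself a bisimulation. The sentences
`⟨x:=a⟩⊤` and `⟨x:=a⟩p_x` detect `χ[F]` and the atoms. For zig, a finite part of the theory of
`F'` is one sentence `β`; naming the agents of `A` by distinct variables turns "the agents of `A`
consider `β` possible" into a sentence true at `F`, hence at `G`. Saturation of `D` then gives a
single facet `G'` realising the whole theory of `F'`, and a complete theory contained in another
equals it.
-/

section HennessyMilner

variable {Ag Xv Pr : Type} [DecidableEq Xv]

namespace Formula

theorem Sent.bigAnd {l : List (Formula Ag Xv Pr)} (h : ∀ φ ∈ l, φ.Sent) :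
    (Formula.bigAnd l).Sent := by
  induction l with
  | nil => exact ⟨trivial, rfl⟩
  | cons φ l ih =>
    obtain ⟨hwf, hfv⟩ := h φ List.mem_cons_self
    obtain ⟨hwf', hfv'⟩ := ih fun ψ hψ => h ψ (List.mem_cons_of_mem φ hψ)
    exact ⟨⟨hwf, hwf'⟩, by simp [Formula.bigAnd, FV, hfv, hfv']⟩

theorem wf_assigns {xs : List Xv} {as : List Ag} {ψ : Formula Ag Xv Pr} (hψ : ψ.Wf) :
    (assigns xs as ψ).Wf := by
  induction xs generalizing as with
  | nil => exact hψ
  | cons x xs ih =>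
    cases as with
    | nil => exact hψ
    | cons a as => exact ih

theorem FV_assigns_map (ι : Ag → Xv) (l : List Ag) (ψ : Formula Ag Xv Pr) :
    (assigns (l.map ι) l ψ).FV = ψ.FV \ (l.map ι).toFinset := by
  induction l with
  | nil => simp [assigns]
  | cons a l ih =>
    ext y
    simp only [List.map_cons, assigns, FV, ih, List.toFinset_cons, Finset.mem_sdiff,
      Finset.mem_insert, Finset.mem_singleton]
    tauto

/-- `[ι a := a]_{a ∈ l} ¬K_{ι[l]} ¬β`: the agents of `l`, each named by its own variable `ι a`,
cannot jointly rule out `β`. -/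
def jointlyPossible (ι : Ag ↪ Xv) (l : List Ag) (β : Formula Ag Xv Pr) : Formula Ag Xv Pr :=
  assigns (l.map ι) l (.neg (.know (l.map ι).toFinset (.neg β)))

theorem Sent.jointlyPossible (ι : Ag ↪ Xv) (l : List Ag) {β : Formula Ag Xv Pr}
    (hβ : β.Sent) : (Formula.jointlyPossible ι l β).Sent :=
  ⟨wf_assigns ⟨hβ.1, hβ.2⟩, by simp [Formula.jointlyPossible, FV_assigns_map, FV]⟩

end Formula

theorem ssat_congr (C : SimpModel Ag Pr) {φ : Formula Ag Xv Pr} (hφ : φ.Wf) {F : Set C.V}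
    {σ σ' : Xv → Ag} (h : ∀ x ∈ φ.FV, σ x = σ' x) : SSat C φ F σ ↔ SSat C φ F σ' := by
  induction φ generalizing F σ σ' with
  | atom p x => simp only [SSat, h x (by simp [Formula.FV])]
  | top => rfl
  | neg φ ih => exact (ih hφ h).not
  | and φ ψ ihφ ihψ =>
    exact and_congr (ihφ hφ.1 fun x hx => h x (by simp [Formula.FV, hx]))
      (ihψ hφ.2 fun x hx => h x (by simp [Formula.FV, hx]))
  | assign x a φ ih =>
    refine imp_congr_right fun _ => ih hφ fun y hy => ?_
    rcases eq_or_ne y x with rfl | hne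
    · simp
    · simpa [Function.update_of_ne hne] using h y (by simp [Formula.FV, hy, hne])
  | know Xs α ih =>
    refine forall₂_congr fun G _ => imp_congr ?_ (ih hφ.1 fun x hx => by simp [hφ.2] at hx)
    exact forall₂_congr fun x hx => by rw [h x hx]

theorem Formula.Sent.ssat_iff {α : Formula Ag Xv Pr} (hα : α.Sent) (C : SimpModel Ag Pr)
    (F : Set C.V) (σ σ' : Xv → Ag) : SSat C α F σ ↔ SSat C α F σ' :=
  ssat_congr C hα.1 fun x hx => by simp [hα.2] at hx

theorem ssat_dia (C : SimpModel Ag Pr) (x : Xv) (a : Ag) (φ : Formula Ag Xv Pr) (F : Set C.V)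
    (σ : Xv → Ag) :
    SSat C (Formula.dia x a φ) F σ ↔ a ∈ C.χ '' F ∧ SSat C φ F (Function.update σ x a) := by
  simp only [Formula.dia, SSat, Classical.not_imp, not_not]

theorem ssat_bigAnd (C : SimpModel Ag Pr) (l : List (Formula Ag Xv Pr)) (F : Set C.V)
    (σ : Xv → Ag) : SSat C (Formula.bigAnd l) F σ ↔ ∀ φ ∈ l, SSat C φ F σ := by
  induction l with
  | nil => simp [Formula.bigAnd, SSat]
  | cons φ l ih => simp [Formula.bigAnd, SSat, ih]

theorem IsSBisim.ssat_iff {C D : SimpModel Ag Pr} {Z : Set (Set C.V × Set D.V)}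
    (hZ : IsSBisim C D Z) (φ : Formula Ag Xv Pr) {F : Set C.V} {G : Set D.V} (hFG : (F, G) ∈ Z)
    (σ : Xv → Ag) : SSat C φ F σ ↔ SSat D φ G σ := by
  induction φ generalizing F G σ with
  | atom p x => simp only [SSat, (hZ.2 F G hFG).1.2 p]
  | top => rfl
  | neg φ ih => exact (ih hFG σ).not
  | and φ ψ ihφ ihψ => exact and_congr (ihφ hFG σ) (ihψ hFG σ)
  | assign x a φ ih =>
    simp only [SSat, (hZ.2 F G hFG).1.1]
    exact imp_congr_right fun _ => ih hFG _
  | know Xs α ih =>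
    obtain ⟨-, hzig, hzag⟩ := hZ.2 F G hFG
    constructor
    · intro h G' hG' hguard
      obtain ⟨F', hF', hsub, hm⟩ :=
        hzag (σ '' Xs) G' hG' (by rintro a ⟨x, hx, rfl⟩; exact hguard x hx)
      exact (ih hm σ).1 (h F' hF' fun x hx => hsub ⟨x, hx, rfl⟩)
    · intro h F' hF' hguard
      obtain ⟨G', hG', hsub, hm⟩ :=
        hzig (σ '' Xs) F' hF' (by rintro a ⟨x, hx, rfl⟩; exact hguard x hx)
      exact (ih hm σ).2 (h G' hG' fun x hx => hsub ⟨x, hx, rfl⟩)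

def nameAgents (ι : Ag ↪ Xv) (l : List Ag) (σ : Xv → Ag) : Xv → Ag :=
  l.foldl (fun τ a => Function.update τ (ι a) a) σ

theorem nameAgents_apply_of_notMem (ι : Ag ↪ Xv) {l : List Ag} {a : Ag} (ha : a ∉ l)
    (σ : Xv → Ag) : nameAgents ι l σ (ι a) = σ (ι a) := by
  induction l generalizing σ with
  | nil => rfl
  | cons b l ih =>
    rw [List.mem_cons, not_or] at ha
    show nameAgents ι l (Function.update σ (ι b) b) (ι a) = σ (ι a)
    rw [ih ha.2, Function.update_of_ne (ι.injective.ne ha.1)]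

theorem nameAgents_apply_of_mem (ι : Ag ↪ Xv) {l : List Ag} {a : Ag} (ha : a ∈ l)
    (σ : Xv → Ag) : nameAgents ι l σ (ι a) = a := by
  induction l generalizing σ with
  | nil => cases ha
  | cons b l ih =>
    show nameAgents ι l (Function.update σ (ι b) b) (ι a) = a
    by_cases hal : a ∈ l
    · exact ih hal _
    · obtain rfl : a = b := (List.mem_cons.1 ha).resolve_right hal
      rw [nameAgents_apply_of_notMem ι hal, Function.update_self]

theorem ssat_assigns_map (C : SimpModel Ag Pr) (ι : Ag ↪ Xv) {l : List Ag} {F : Set C.V}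
    (hl : ∀ a ∈ l, a ∈ C.χ '' F) (ψ : Formula Ag Xv Pr) (σ : Xv → Ag) :
    SSat C (Formula.assigns (l.map ι) l ψ) F σ ↔ SSat C ψ F (nameAgents ι l σ) := by
  induction l generalizing σ with
  | nil => rfl
  | cons a l ih =>
    simp only [List.map_cons, Formula.assigns, SSat]
    rw [imp_iff_right (hl a List.mem_cons_self), ih fun b hb => hl b (List.mem_cons_of_mem a hb)]
    rfl

theorem ssat_jointlyPossible_iff (C : SimpModel Ag Pr) (ι : Ag ↪ Xv) {l : List Ag}
    {β : Formula Ag Xv Pr} (hβ : β.Sent) {F : Set C.V} (hl : ∀ a ∈ l, a ∈ C.χ '' F)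
    (σ : Xv → Ag) :
    SSat C (Formula.jointlyPossible ι l β) F σ ↔
      ∃ H ∈ C.facets, (∀ a ∈ l, a ∈ C.χ '' (F ∩ H)) ∧ ∀ σ', SSat C β H σ' := by
  have hguard : ∀ H : Set C.V, (∀ x ∈ (l.map ι).toFinset, nameAgents ι l σ x ∈ C.χ '' (F ∩ H))
      ↔ ∀ a ∈ l, a ∈ C.χ '' (F ∩ H) := by
    intro H
    simp +contextual [nameAgents_apply_of_mem ι]
  rw [Formula.jointlyPossible, ssat_assigns_map C ι hl]
  simp only [SSat, hguard, not_forall, not_not, exists_prop]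
  exact exists_congr fun H => and_congr_right fun _ => and_congr_right fun _ =>
    ⟨fun h σ' => (hβ.ssat_iff C H _ σ').1 h, fun h => h _⟩

variable (Xv) in
def theory (C : SimpModel Ag Pr) (F : Set C.V) : Set (Formula Ag Xv Pr) :=
  {α | α.Sent ∧ ∀ σ, SSat C α F σ}

theorem theory_eq_iff {C D : SimpModel Ag Pr} {F : Set C.V} {G : Set D.V} :
    theory Xv C F = theory Xv D G ↔ ∀ α : Formula Ag Xv Pr, α.Sent →
      ((∀ σ : Xv → Ag, SSat C α F σ) ↔ (∀ σ : Xv → Ag, SSat D α G σ)) := by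
  simp only [Set.ext_iff, theory, Set.mem_ofPred_eq, and_congr_right_iff]

theorem IsSBisim.theory_eq {C D : SimpModel Ag Pr} {Z : Set (Set C.V × Set D.V)}
    (hZ : IsSBisim C D Z) {F : Set C.V} {G : Set D.V} (hFG : (F, G) ∈ Z) :
    theory Xv C F = theory Xv D G :=
  Set.ext fun α => and_congr_right fun _ => forall_congr' fun σ => hZ.ssat_iff α hFG σ

theorem image_eq_of_theory_eq [Nonempty Xv] {C D : SimpModel Ag Pr} {F : Set C.V}
    {G : Set D.V} (h : theory Xv C F = theory Xv D G) : C.χ '' F = D.χ '' G := by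
  obtain ⟨x⟩ := ‹Nonempty Xv›
  ext a
  have : Nonempty Ag := ⟨a⟩
  have hα : (Formula.dia x a .top : Formula Ag Xv Pr).Sent :=
    ⟨trivial, by simp [Formula.dia, Formula.FV]⟩
  simpa [ssat_dia, SSat] using theory_eq_iff.1 h _ hα

theorem image_inter_eq_of_theory_eq [Nonempty Xv] {C D : SimpModel Ag Pr} {F : Set C.V}
    {G : Set D.V} (h : theory Xv C F = theory Xv D G) (p : Pr) :
    C.χ '' (F ∩ C.ℓ p) = D.χ '' (G ∩ D.ℓ p) := by
  obtain ⟨x⟩ := ‹Nonempty Xv›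
  ext a
  have : Nonempty Ag := ⟨a⟩
  have hα : (Formula.dia x a (.atom p x) : Formula Ag Xv Pr).Sent :=
    ⟨trivial, by simp [Formula.dia, Formula.FV]⟩
  have hC : a ∈ C.χ '' (F ∩ C.ℓ p) → a ∈ C.χ '' F := (Set.image_mono Set.inter_subset_left ·)
  have hD : a ∈ D.χ '' (G ∩ D.ℓ p) → a ∈ D.χ '' G := (Set.image_mono Set.inter_subset_left ·)
  have := theory_eq_iff.1 h _ hα
  simp only [ssat_dia, SSat, Function.update_self, forall_const] at this
  rwa [and_iff_right_of_imp hC, and_iff_right_of_imp hD] at this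

theorem theory_eq_of_subset {C D : SimpModel Ag Pr} {F : Set C.V} {G : Set D.V}
    (h : theory Xv C F ⊆ theory Xv D G) : theory Xv C F = theory Xv D G := by
  refine h.antisymm fun α ⟨hα, hαG⟩ => ⟨hα, fun σ => ?_⟩
  by_contra hαF
  have hneg : Formula.neg α ∈ theory Xv C F :=
    ⟨⟨hα.1, hα.2⟩, fun σ' => (hα.ssat_iff C F σ' σ).not.2 hαF⟩
  exact (h hneg).2 σ (hαG σ)

/-- Finite satisfiability for the saturation of `D`: a finite part `Δ₀` of the theory of `F'`
is a single sentence, which the agents of `As` at `F` consider possible, and so do they at `G`. -/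
theorem exists_facet_of_finite_subset_theory [Finite Ag] [Nonempty Ag] [Infinite Xv]
    {C D : SimpModel Ag Pr} {F F' : Set C.V} {G : Set D.V} (hFG : theory Xv C F = theory Xv D G)
    (hF' : F' ∈ C.facets) {As : Set Ag} (hAs : As ⊆ C.χ '' (F ∩ F'))
    {Δ₀ : Set (Formula Ag Xv Pr)} (hΔ₀ : Δ₀ ⊆ theory Xv C F') (hfin : Δ₀.Finite) :
    ∃ H ∈ D.facets, As ⊆ D.χ '' (G ∩ H) ∧ ∀ α ∈ Δ₀, ∀ σ, SSat D α H σ := by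
  obtain ⟨ι⟩ : Nonempty (Ag ↪ Xv) :=
    (Function.Embedding.total Ag Xv).resolve_right (not_nonempty_iff.2 inferInstance)
  obtain ⟨l, hl⟩ : ∃ l : List Ag, ∀ a, a ∈ l ↔ a ∈ As :=
    ⟨(Set.toFinite As).toFinset.toList, by simp⟩
  obtain ⟨m, hm⟩ : ∃ m : List (Formula Ag Xv Pr), ∀ α, α ∈ m ↔ α ∈ Δ₀ :=
    ⟨hfin.toFinset.toList, by simp⟩
  have hβ : (Formula.bigAnd m).Sent := Formula.Sent.bigAnd fun α hα => (hΔ₀ ((hm α).1 hα)).1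
  have hlF : ∀ a ∈ l, a ∈ C.χ '' F :=
    fun a ha => Set.image_mono Set.inter_subset_left (hAs ((hl a).1 ha))
  have hlG : ∀ a ∈ l, a ∈ D.χ '' G := image_eq_of_theory_eq hFG ▸ hlF
  have hposs : Formula.jointlyPossible ι l (Formula.bigAnd m) ∈ theory Xv C F :=
    ⟨hβ.jointlyPossible ι l, fun σ => (ssat_jointlyPossible_iff C ι hβ hlF σ).2
      ⟨F', hF', fun a ha => hAs ((hl a).1 ha),
        fun σ' => (ssat_bigAnd C m F' σ').2 fun α hα => (hΔ₀ ((hm α).1 hα)).2 σ'⟩⟩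
  obtain ⟨H, hH, hGH, hβH⟩ :=
    (ssat_jointlyPossible_iff D ι hβ hlG fun _ => Classical.arbitrary Ag).1 ((hFG ▸ hposs).2 _)
  exact ⟨H, hH, fun a ha => hGH a ((hl a).2 ha),
    fun α hα σ => (ssat_bigAnd D m H σ).1 (hβH σ) α ((hm α).2 hα)⟩

theorem exists_facet_theory_eq [Finite Ag] [Nonempty Ag] [Infinite Xv]
    {C D : SimpModel Ag Pr} (hDsat : SSaturated Xv D) {F : Set C.V} {G : Set D.V}
    (hG : G ∈ D.facets) (hFG : theory Xv C F = theory Xv D G) {F' : Set C.V}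
    (hF' : F' ∈ C.facets) {As : Set Ag} (hAs : As ⊆ C.χ '' (F ∩ F')) :
    ∃ G' ∈ D.facets, As ⊆ D.χ '' (G ∩ G') ∧ theory Xv C F' = theory Xv D G' := by
  obtain ⟨G', hG', hGG', hall⟩ := hDsat As G hG (theory Xv C F') (fun α hα => hα.1)
    fun Δ₀ hΔ₀ hfin => exists_facet_of_finite_subset_theory hFG hF' hAs hΔ₀ hfin
  exact ⟨G', hG', hGG', theory_eq_of_subset fun α hα => ⟨hα.1, hall α hα⟩⟩

theorem isSBisim_theory_eq [Finite Ag] [Nonempty Ag] [Infinite Xv] {C D : SimpModel Ag Pr}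
    (hCsat : SSaturated Xv C) (hDsat : SSaturated Xv D) :
    IsSBisim C D {q | q.1 ∈ C.facets ∧ q.2 ∈ D.facets ∧ theory Xv C q.1 = theory Xv D q.2} := by
  refine ⟨fun q hq => ⟨hq.1, hq.2.1⟩, fun F G ⟨hF, hG, hFG⟩ =>
    ⟨⟨image_eq_of_theory_eq hFG, image_inter_eq_of_theory_eq hFG⟩, ?_, ?_⟩⟩
  · intro As F' hF' hAs
    obtain ⟨G', hG', hGG', h⟩ := exists_facet_theory_eq hDsat hG hFG hF' hAs
    exact ⟨G', hG', hGG', hF', hG', h⟩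
  · intro As G' hG' hAs
    obtain ⟨F', hF', hFF', h⟩ := exists_facet_theory_eq hCsat hF hFG.symm hG' hAs
    exact ⟨F', hF', hFF', hF', hG', h.symm⟩

end HennessyMilner

theorem hennessy_milner_simplicial_general
    {Ag Xv Pr : Type} [Fintype Ag] [Nonempty Ag]
    [DecidableEq Xv] [Infinite Xv]
    (C D : SimpModel Ag Pr)
    (hCsat : SSaturated Xv C) (hDsat : SSaturated Xv D)
    (F : Set C.V) (G : Set D.V) (hF : F ∈ C.facets) (hG : G ∈ D.facets) :
    (∃ Z, IsSBisim C D Z ∧ (F, G) ∈ Z) ↔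
      (∀ α : Formula Ag Xv Pr, Formula.Sent α →
        ((∀ σ : Xv → Ag, SSat C α F σ) ↔ (∀ σ : Xv → Ag, SSat D α G σ))) := by
  rw [← theory_eq_iff]
  exact ⟨fun ⟨_, hZ, hFG⟩ => hZ.theory_eq hFG,
    fun hFG => ⟨_, isSBisim_theory_eq hCsat hDsat, hF, hG, hFG⟩⟩

/-- Hennessy-Milner property for saturated simplicial models. -/
theorem hennessy_milner_simplicial
    {Ag Xv Pr : Type} [Fintype Ag] [Nonempty Ag] [DecidableEq Ag]
    [DecidableEq Xv] [Countable Xv] [Infinite Xv] [Countable Pr]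
    (C D : SimpModel Ag Pr) (hC : C.IsModel) (hD : D.IsModel)
    (hCsat : SSaturated Xv C) (hDsat : SSaturated Xv D)
    (F : Set C.V) (G : Set D.V) (hF : F ∈ C.facets) (hG : G ∈ D.facets) :
    (∃ Z, IsSBisim C D Z ∧ (F, G) ∈ Z) ↔
      (∀ α : Formula Ag Xv Pr, Formula.Sent α →
        ((∀ σ : Xv → Ag, SSat C α F σ) ↔ (∀ σ : Xv → Ag, SSat D α G σ))) :=
  hennessy_milner_simplicial_general C D hCsat hDsat F G hF hG

end SimplicialEpistemic
end

section
/- For any local epistemic model M=(W,δ,{R_a},ρ), the properization M^pr is a proper local epistemic model, and for every w∈W, M,w and M^pr,[w]_δ are bisimilar (hence satisfy the same sentences). Moreover, if M is already a proper local epistemic model, then M is isomorphic to M^pr. -/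
namespace SimplicialEpistemic

section AuxProperize

variable {Ag Xv Pr : Type} {M : KModel Ag Pr}

lemma Rrefl' (hL : LocalS5 M) {a : Ag} {w : M.W} (hw : a ∈ M.δ w) : M.R a w w :=
  (hL a).refl ⟨w, hw⟩

lemma Rsymm' (hL : LocalS5 M) {a : Ag} {w v : M.W} (hw : a ∈ M.δ w) (hv : a ∈ M.δ v)
    (h : M.R a w v) : M.R a v w :=
  (hL a).symm (x := ⟨w, hw⟩) (y := ⟨v, hv⟩) h

lemma Rtrans' (hL : LocalS5 M) {a : Ag} {w v u : M.W} (hw : a ∈ M.δ w) (hv : a ∈ M.δ v)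
    (hu : a ∈ M.δ u) (h1 : M.R a w v) (h2 : M.R a v u) : M.R a w u :=
  (hL a).trans (x := ⟨w, hw⟩) (y := ⟨v, hv⟩) (z := ⟨u, hu⟩) h1 h2

lemma mem_cell_self (hL : LocalS5 M) (w : M.W) : w ∈ cell M w :=
  fun _ ha => Rrefl' hL ha

lemma delta_eq_of_mem_cell (hLEM : IsLEM M) {w v : M.W} (h : v ∈ cell M w) :
    M.δ v = M.δ w := by
  apply Set.Subset.antisymm (hLEM.2.2.2 w v h)
  intro a ha
  exact hLEM.2.1 a w v ha (h a ha)

lemma rho_eq_of_mem_cell (hM : M.IsModel) (hLEM : IsLEM M) {w v : M.W}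
    (h : v ∈ cell M w) (p : Pr) : M.ρ p v = M.ρ p w := by
  have hδ := delta_eq_of_mem_cell hLEM h
  ext a
  constructor
  · intro ha
    have haδv : a ∈ M.δ v := hM.2.2.2 p v ha
    have haδw : a ∈ M.δ w := by rw [← hδ]; exact haδv
    exact hLEM.2.2.1 p a v w ha (Rsymm' hLEM.1 haδw haδv (h a haδw))
  · intro ha
    have haδw : a ∈ M.δ w := hM.2.2.2 p w ha
    exact hLEM.2.2.1 p a w v ha (h a haδw)

lemma cell_eq_of_mem_cell (hLEM : IsLEM M) {w v : M.W} (h : v ∈ cell M w) :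
    cell M v = cell M w := by
  have hδ := delta_eq_of_mem_cell hLEM h
  ext u
  constructor
  · intro hu a ha
    have hav : a ∈ M.δ v := by rw [hδ]; exact ha
    have hau : a ∈ M.δ u := hLEM.2.1 a v u hav (hu a hav)
    exact Rtrans' hLEM.1 ha hav hau (h a ha) (hu a hav)
  · intro hu a hav
    have haw : a ∈ M.δ w := by rw [← hδ]; exact hav
    have hau : a ∈ M.δ u := hLEM.2.1 a w u haw (hu a haw)
    exact Rtrans' hLEM.1 hav haw hau (Rsymm' hLEM.1 haw hav (h a haw)) (hu a haw)

lemma properize_delta (hLEM : IsLEM M) (S : (properize M).W) (w : M.W)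
    (hS : S.1 = cell M w) : (properize M).δ S = M.δ w := by
  have h1 : S.1 = cell M S.2.choose := S.2.choose_spec
  have h2 : cell M w = cell M S.2.choose := hS.symm.trans h1
  have hmem : S.2.choose ∈ cell M w := by
    rw [h2]; exact mem_cell_self hLEM.1 _
  exact delta_eq_of_mem_cell hLEM hmem

lemma properize_rho (hM : M.IsModel) (hLEM : IsLEM M) (S : (properize M).W) (w : M.W)
    (hS : S.1 = cell M w) (p : Pr) : (properize M).ρ p S = M.ρ p w := by
  have h1 : S.1 = cell M S.2.choose := S.2.choose_spec
  have h2 : cell M w = cell M S.2.choose := hS.symm.trans h1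
  have hmem : S.2.choose ∈ cell M w := by
    rw [h2]; exact mem_cell_self hLEM.1 _
  exact rho_eq_of_mem_cell hM hLEM hmem p

lemma properize_R (hM : M.IsModel) (hLEM : IsLEM M) {a : Ag} {S T : (properize M).W}
    {w v : M.W} (hS : S.1 = cell M w) (hT : T.1 = cell M v) :
    (properize M).R a S T ↔ M.R a w v := by
  constructor
  · rintro ⟨w', v', hSw', hTv', h⟩
    have hcw : cell M w' = cell M w := by rw [← hSw', hS]
    have hcv : cell M v' = cell M v := by rw [← hTv', hT]
    have haw' : a ∈ M.δ w' := hM.2.2.1 a w' v' h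
    have hwmem : w ∈ cell M w' := by rw [hcw]; exact mem_cell_self hLEM.1 w
    have haw : a ∈ M.δ w := by rw [delta_eq_of_mem_cell hLEM hwmem]; exact haw'
    have hav' : a ∈ M.δ v' := hLEM.2.1 a w' v' haw' h
    have hvmem : v ∈ cell M v' := by rw [hcv]; exact mem_cell_self hLEM.1 v
    have hR1 : M.R a w' w := hwmem a haw'
    have hR2 : M.R a v' v := hvmem a hav'
    have hav : a ∈ M.δ v := hLEM.2.1 a v' v hav' hR2
    exact Rtrans' hLEM.1 haw hav' hav
      (Rtrans' hLEM.1 haw haw' hav' (Rsymm' hLEM.1 haw' haw hR1) h) hR2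
  · intro h
    exact ⟨w, v, hS, hT, h⟩

lemma bisim_ksat [DecidableEq Xv] {M N : KModel Ag Pr} {Z : Set (M.W × N.W)}
    (hZ : IsKBisim M N Z) (φ : Formula Ag Xv Pr) :
    ∀ (w : M.W) (v : N.W), (w, v) ∈ Z → ∀ σ, (KSat M φ w σ ↔ KSat N φ v σ) := by
  induction φ with
  | atom p x =>
      intro w v h σ
      simp only [KSat]
      rw [(hZ w v h).1.2 p]
  | top => intro w v h σ; simp [KSat]
  | neg φ ih =>
      intro w v h σ
      simp only [KSat]
      rw [ih w v h σ]
  | and φ ψ ih1 ih2 =>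
      intro w v h σ
      simp only [KSat]
      rw [ih1 w v h σ, ih2 w v h σ]
  | assign x a φ ih =>
      intro w v h σ
      simp only [KSat]
      rw [(hZ w v h).1.1, ih w v h _]
  | know Xs α ih =>
      intro w v h σ
      simp only [KSat]
      constructor
      · intro hk v' hv'
        obtain ⟨w', hw', hZ'⟩ := (hZ w v h).2.2 {a | ∃ x ∈ Xs, σ x = a} v'
          (fun a ha => by obtain ⟨x, hx, rfl⟩ := ha; exact hv' x hx)
        exact (ih w' v' hZ' σ).mp (hk w' fun x hx => hw' (σ x) ⟨x, hx, rfl⟩)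
      · intro hk w' hw'
        obtain ⟨v', hv', hZ'⟩ := (hZ w v h).2.1 {a | ∃ x ∈ Xs, σ x = a} w'
          (fun a ha => by obtain ⟨x, hx, rfl⟩ := ha; exact hw' x hx)
        exact (ih w' v' hZ' σ).mpr (hk v' fun x hx => hv' (σ x) ⟨x, hx, rfl⟩)

end AuxProperize

/-- the properization of a local epistemic model is a proper local
epistemic model bisimilar (hence logically equivalent) to the original model at
each world; a proper local epistemic model is isomorphic to its properization. -/
theorem properization_spec
    {Ag Xv Pr : Type} [Fintype Ag] [Nonempty Ag] [DecidableEq Ag]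
    [DecidableEq Xv] [Countable Xv] [Infinite Xv] [Countable Pr]
    (M : KModel Ag Pr) (hM : M.IsModel) (hLEM : IsLEM M) :
    (properize M).IsModel ∧ IsLEM (properize M) ∧ Proper (properize M) ∧
      (∀ w : M.W,
        ∃ Z, IsKBisim M (properize M) Z ∧
          (w, (⟨cell M w, ⟨w, rfl⟩⟩ : (properize M).W)) ∈ Z) ∧
      (∀ (w : M.W) (α : Formula Ag Xv Pr), Formula.Sent α →
        ((∀ σ : Xv → Ag, KSat M α w σ) ↔
          (∀ σ : Xv → Ag,
            KSat (properize M) α (⟨cell M w, ⟨w, rfl⟩⟩ : (properize M).W) σ))) ∧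
      (Proper M → Nonempty (KIso M (properize M))) := by
  -- characterization of properize via the chosen representatives
  have hcs : ∀ S : (properize M).W, S.1 = cell M S.2.choose := fun S => S.2.choose_spec
  have hRchar : ∀ (a : Ag) (S T : (properize M).W),
      (properize M).R a S T ↔ M.R a S.2.choose T.2.choose := by
    intro a S T
    exact properize_R hM hLEM (hcs S) (hcs T)
  have hδdef : ∀ S : (properize M).W, (properize M).δ S = M.δ S.2.choose := fun _ => rfl
  have hρdef : ∀ (p : Pr) (S : (properize M).W),
      (properize M).ρ p S = M.ρ p S.2.choose := fun _ _ => rfl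
  refine ⟨?_, ?_, ?_, ?_, ?_, ?_⟩
  · -- IsModel
    refine ⟨hM.1.elim fun w => ⟨⟨cell M w, w, rfl⟩⟩, fun S => hM.2.1 S.2.choose,
      ?_, fun p S => hM.2.2.2 p S.2.choose⟩
    intro a S T h
    rw [hRchar a S T] at h
    exact hM.2.2.1 a _ _ h
  · -- IsLEM
    refine ⟨?_, ?_, ?_, ?_⟩
    · -- LocalS5
      intro a
      constructor
      · rintro ⟨S, hS⟩
        exact (hRchar a S S).mpr (Rrefl' hLEM.1 hS)
      · rintro ⟨S, hS⟩ ⟨T, hT⟩ h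
        have h' := (hRchar a S T).mp h
        exact (hRchar a T S).mpr (Rsymm' hLEM.1 hS hT h')
      · rintro ⟨S, hS⟩ ⟨T, hT⟩ ⟨U, hU⟩ h1 h2
        exact (hRchar a S U).mpr
          (Rtrans' hLEM.1 hS hT hU ((hRchar a S T).mp h1) ((hRchar a T U).mp h2))
    · -- IndInc
      intro a S T ha h
      exact hLEM.2.1 a S.2.choose T.2.choose ha ((hRchar a S T).mp h)
    · -- LocalPred
      intro p a S T ha h
      exact hLEM.2.2.1 p a S.2.choose T.2.choose ha ((hRchar a S T).mp h)
    · -- CollDec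
      intro S T h
      have hmem : T.2.choose ∈ cell M S.2.choose :=
        fun a ha => (hRchar a S T).mp (h a ha)
      exact hLEM.2.2.2 S.2.choose T.2.choose hmem
  · -- Proper
    intro S
    ext T
    simp only [Set.mem_setOf_eq, Set.mem_singleton_iff]
    constructor
    · intro h
      have hmem : T.2.choose ∈ cell M S.2.choose :=
        fun a ha => (hRchar a S T).mp (h a ha)
      have : cell M T.2.choose = cell M S.2.choose := cell_eq_of_mem_cell hLEM hmem
      apply Subtype.ext
      rw [hcs T, hcs S, this]
    · rintro rfl
      intro a ha
      exact (hRchar a T T).mpr (Rrefl' hLEM.1 ha)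
  · -- bisimulation
    intro w
    refine ⟨{q : M.W × (properize M).W | q.2.1 = cell M q.1}, ?_, rfl⟩
    intro u S hS
    refine ⟨⟨(properize_delta hLEM S u hS).symm,
      fun p => (properize_rho hM hLEM S u hS p).symm⟩, ?_, ?_⟩
    · intro As w' hw'
      refine ⟨⟨cell M w', w', rfl⟩, fun a ha => ⟨u, w', hS, rfl, hw' a ha⟩, rfl⟩
    · intro As T hT
      refine ⟨T.2.choose, fun a ha => ?_, (hcs T)⟩
      exact (properize_R hM hLEM hS (hcs T)).mp (hT a ha)
  · -- logical equivalence
    intro w α _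
    obtain ⟨Z, hZ, hwZ⟩ :
        ∃ Z, IsKBisim M (properize M) Z ∧
          (w, (⟨cell M w, ⟨w, rfl⟩⟩ : (properize M).W)) ∈ Z := by
      refine ⟨{q : M.W × (properize M).W | q.2.1 = cell M q.1}, ?_, rfl⟩
      intro u S hS
      refine ⟨⟨(properize_delta hLEM S u hS).symm,
        fun p => (properize_rho hM hLEM S u hS p).symm⟩, ?_, ?_⟩
      · intro As w' hw'
        refine ⟨⟨cell M w', w', rfl⟩, fun a ha => ⟨u, w', hS, rfl, hw' a ha⟩, rfl⟩
      · intro As T hT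
        refine ⟨T.2.choose, fun a ha => ?_, (hcs T)⟩
        exact (properize_R hM hLEM hS (hcs T)).mp (hT a ha)
    have := bisim_ksat hZ α w _ hwZ
    exact ⟨fun h σ => (this σ).mp (h σ), fun h σ => (this σ).mpr (h σ)⟩
  · -- isomorphism when proper
    intro hp
    have hcellw : ∀ u : M.W, cell M u = {u} := fun u => hp u
    have hinj : Function.Injective
        (fun u : M.W => (⟨cell M u, u, rfl⟩ : (properize M).W)) := by
      intro u u' h
      have h1 : cell M u = cell M u' := congrArg Subtype.val h
      rw [hcellw u, hcellw u'] at h1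
      exact Set.singleton_eq_singleton_iff.mp h1
    have hsurj : Function.Surjective
        (fun u : M.W => (⟨cell M u, u, rfl⟩ : (properize M).W)) := by
      intro S
      exact ⟨S.2.choose, Subtype.ext (hcs S).symm⟩
    refine ⟨⟨Equiv.ofBijective _ ⟨hinj, hsurj⟩, ?_, ?_, ?_⟩⟩
    · intro u
      exact properize_delta hLEM _ u rfl
    · intro a u v
      exact properize_R hM hLEM rfl rfl
    · intro p u
      exact properize_rho hM hLEM _ u rfl p

end SimplicialEpistemic
end

section
/- For any simplicial model C=(V,C,χ,ℓ), the associated first-order Kripke model LEM(C) is a proper local epistemic model, and truth is preserved: for every facet F∈F(C) and every sentence α of L, C,F ⊩ α if and only if LEM(C),F ⊨ α. -/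
namespace SimplicialEpistemic

/-- `LEM(C)` is a proper local epistemic model and truth is preserved. -/
theorem LEM_spec
    {Ag Xv Pr : Type} [Fintype Ag] [Nonempty Ag] [DecidableEq Ag]
    [DecidableEq Xv] [Countable Xv] [Infinite Xv] [Countable Pr]
    (C : SimpModel Ag Pr) (hC : C.IsModel) :
    (LEMof C).IsModel ∧ IsLEM (LEMof C) ∧ Proper (LEMof C) ∧
      ∀ (F : Set C.V) (hF : F ∈ C.facets) (α : Formula Ag Xv Pr), Formula.Sent α →
        ((∀ σ : Xv → Ag, SSat C α F σ) ↔
          (∀ σ : Xv → Ag, KSat (LEMof C) α (⟨F, hF⟩ : (LEMof C).W) σ)) := by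
  obtain ⟨⟨v0⟩, hemp, hsub, hvert, hinj⟩ := hC
  -- every face is finite, with ncard at most the number of agents
  have hfin : ∀ F ∈ C.faces, F.Finite := fun F hF =>
    Set.Finite.of_finite_image (Set.toFinite _) (hinj F hF)
  have hcard : ∀ F ∈ C.faces, F.ncard ≤ Fintype.card Ag := by
    intro F hF
    calc F.ncard = (C.χ '' F).ncard := (Set.ncard_image_of_injOn (hinj F hF)).symm
      _ ≤ (Set.univ : Set Ag).ncard :=
          Set.ncard_le_ncard (Set.subset_univ _) Set.finite_univ
      _ = Fintype.card Ag := by simp [Set.ncard_univ]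
  -- existence of a facet
  have hTne : ({n : ℕ | ∃ F ∈ C.faces, F.ncard = n}).Nonempty :=
    ⟨({v0} : Set C.V).ncard, {v0}, hvert v0, rfl⟩
  have hTbdd : BddAbove {n : ℕ | ∃ F ∈ C.faces, F.ncard = n} :=
    ⟨Fintype.card Ag, fun n hn => by obtain ⟨F, hF, rfl⟩ := hn; exact hcard F hF⟩
  obtain ⟨F0, hF0, hF0card⟩ := Nat.sSup_mem hTne hTbdd
  have hF0facet : F0 ∈ C.facets := by
    refine ⟨hF0, fun G hG hFG => ?_⟩
    refine Set.eq_of_subset_of_ncard_le hFG ?_ (hfin G hG)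
    rw [hF0card]
    exact le_csSup hTbdd ⟨G, hG, rfl⟩
  -- facets are nonempty faces
  have hfacemem : ∀ F ∈ C.facets, F ∈ C.faces := fun F hF => hF.1
  have hfacne : ∀ F ∈ C.facets, F.Nonempty := by
    intro F hF
    rcases Set.eq_empty_or_nonempty F with h | h
    · exact absurd (h ▸ hF.1) hemp
    · exact h
  -- key lemma: if a ∈ χ[F∩G] and a ∈ χ[G∩H] then a ∈ χ[F∩H] (injectivity on G)
  have htrans : ∀ F G H, G ∈ C.faces → ∀ a : Ag,
      a ∈ C.χ '' (F ∩ G) → a ∈ C.χ '' (G ∩ H) → a ∈ C.χ '' (F ∩ H) := by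
    intro F G H hG a ⟨u, ⟨huF, huG⟩, hu⟩ ⟨w, ⟨hwG, hwH⟩, hw⟩
    have : u = w := hinj G hG huG hwG (by rw [hu, hw])
    exact ⟨u, ⟨huF, this ▸ hwH⟩, hu⟩
  -- key lemma: if all of χ[F] is in χ[F∩G] then F ⊆ G
  have hsubgl : ∀ F G, F ∈ C.faces →
      (∀ a ∈ C.χ '' F, a ∈ C.χ '' (F ∩ G)) → F ⊆ G := by
    intro F G hF h v hv
    obtain ⟨w, ⟨hwF, hwG⟩, hw⟩ := h (C.χ v) ⟨v, hv, rfl⟩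
    exact (hinj F hF hwF hv hw) ▸ hwG
  have hcollapse : ∀ F G, F ∈ C.facets → G ∈ C.faces →
      (∀ a ∈ C.χ '' F, a ∈ C.χ '' (F ∩ G)) → F = G := by
    intro F G hF hG h
    exact hF.2 G hG (hsubgl F G hF.1 h)
  refine ⟨?_, ?_, ?_, ?_⟩
  · -- IsModel
    refine ⟨⟨⟨F0, hF0facet⟩⟩, ?_, ?_, ?_⟩
    · intro w
      obtain ⟨v, hv⟩ := hfacne w.1 w.2
      exact ⟨C.χ v, v, hv, rfl⟩
    · rintro a w v ⟨u, ⟨hu1, hu2⟩, hu⟩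
      exact ⟨u, hu1, hu⟩
    · rintro p w a ⟨u, ⟨hu1, hu2⟩, hu⟩
      exact ⟨u, hu1, hu⟩
  · -- IsLEM
    refine ⟨?_, ?_, ?_, ?_⟩
    · -- LocalS5
      intro a
      constructor
      · rintro ⟨w, hw⟩
        simpa [LEMof, Set.inter_self] using hw
      · rintro ⟨w, hw⟩ ⟨v, hv⟩ h
        simpa [LEMof, Set.inter_comm] using h
      · rintro ⟨w, hw⟩ ⟨v, hv⟩ ⟨u, hu⟩ h1 h2
        exact htrans w.1 v.1 u.1 (hfacemem v.1 v.2) a h1 h2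
    · -- IndInc
      rintro a w v _ ⟨u, ⟨hu1, hu2⟩, hu⟩
      exact ⟨u, hu2, hu⟩
    · -- LocalPred
      rintro p a w v ⟨u, ⟨huF, huℓ⟩, hu⟩ ⟨x, ⟨hxF, hxG⟩, hx⟩
      have : u = x := hinj w.1 (hfacemem w.1 w.2) huF hxF (by rw [hu, hx])
      exact ⟨u, ⟨this ▸ hxG, huℓ⟩, hu⟩
    · -- CollDec
      intro w v h
      have h2 : w.1 = v.1 := hcollapse w.1 v.1 w.2 (hfacemem v.1 v.2) h
      show C.χ '' v.1 ⊆ C.χ '' w.1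
      rw [h2]
  · -- Proper
    intro w
    ext v
    simp only [Set.mem_setOf_eq, Set.mem_singleton_iff]
    constructor
    · intro h
      have : w.1 = v.1 := hcollapse w.1 v.1 w.2 (hfacemem v.1 v.2) h
      exact Subtype.ext this.symm
    · rintro rfl
      intro a ha
      simpa [LEMof, Set.inter_self] using ha
  · -- Truth preservation
    have main : ∀ (φ : Formula Ag Xv Pr) (F : Set C.V) (hF : F ∈ C.facets) (σ : Xv → Ag),
        SSat C φ F σ ↔ KSat (LEMof C) φ (⟨F, hF⟩ : (LEMof C).W) σ := by
      intro φ
      induction φ with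
      | atom p x => intro F hF σ; exact Iff.rfl
      | top => intro F hF σ; exact Iff.rfl
      | neg φ ih => intro F hF σ; exact not_congr (ih F hF σ)
      | and φ ψ ih1 ih2 => intro F hF σ; exact and_congr (ih1 F hF σ) (ih2 F hF σ)
      | assign x a φ ih => intro F hF σ; exact imp_congr Iff.rfl (ih F hF _)
      | know Xs α ih =>
        intro F hF σ
        constructor
        · intro h v hv
          exact (ih v.1 v.2 σ).mp (h v.1 v.2 hv)
        · intro h G hG hGR
          exact (ih G hG σ).mpr (h ⟨G, hG⟩ hGR)
    intro F hF α _
    exact forall_congr' fun σ => main α F hF σ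

end SimplicialEpistemic
end

section
/- For any local epistemic model M=(W,δ,{R_a},ρ), the associated structure SC(M) is a simplicial model whose set of facets is exactly {F^M_w | w∈W}, and truth is preserved: for every w∈W and every sentence α of L, M,w ⊨ α if and only if SC(M),F^M_w ⊩ α. -/
namespace SimplicialEpistemic

section Aux

variable {Ag Xv Pr : Type} (M : KModel Ag Pr)

lemma R_mem_right (hM : M.IsModel) (hLEM : IsLEM M) {a : Ag} {w v : M.W}
    (h : M.R a w v) : a ∈ M.δ v :=
  hLEM.2.1 a w v (hM.2.2.1 a w v h) h

lemma R_symm (hLEM : IsLEM M) {a : Ag} {w v : M.W} (hw : a ∈ M.δ w) (hv : a ∈ M.δ v)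
    (h : M.R a w v) : M.R a v w :=
  (hLEM.1 a).symm (x := ⟨w, hw⟩) (y := ⟨v, hv⟩) h

lemma R_refl (hLEM : IsLEM M) {a : Ag} {w : M.W} (hw : a ∈ M.δ w) : M.R a w w :=
  (hLEM.1 a).refl ⟨w, hw⟩

lemma cell_eq (hM : M.IsModel) (hLEM : IsLEM M) {a : Ag} {w v : M.W} (h : M.R a w v) :
    {u : M.W | M.R a w u} = {u : M.W | M.R a v u} := by
  have hw := hM.2.2.1 a w v h
  have hv := R_mem_right M hM hLEM h
  ext u
  simp only [Set.mem_setOf_eq]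
  constructor
  · intro hu
    have hud := R_mem_right M hM hLEM hu
    exact (hLEM.1 a).trans (x := ⟨v, hv⟩) (y := ⟨w, hw⟩) (z := ⟨u, hud⟩)
      (R_symm M hLEM hw hv h) hu
  · intro hu
    have hud := R_mem_right M hM hLEM hu
    exact (hLEM.1 a).trans (x := ⟨w, hw⟩) (y := ⟨v, hv⟩) (z := ⟨u, hud⟩) h hu

lemma cell_eq' (hLEM : IsLEM M) {a : Ag} {w v : M.W} (hw : a ∈ M.δ w) (hv : a ∈ M.δ v)
    (h : {u : M.W | M.R a w u} = {u : M.W | M.R a v u}) : M.R a w v := by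
  have : v ∈ {u : M.W | M.R a v u} := R_refl M hLEM hv
  rw [← h] at this
  exact this

/-- Membership in the χ-image of a face `F^M_w`. -/
lemma chi_SCface (hLEM : IsLEM M) (w : M.W) :
    (SCof M).χ '' (SCface M w) = M.δ w := by
  ext a
  constructor
  · rintro ⟨u, ⟨hu1, _⟩, rfl⟩
    exact hu1
  · intro ha
    exact ⟨⟨(a, {v | M.R a w v}), w, ha, rfl⟩, ⟨ha, rfl⟩, rfl⟩

/-- Membership in the χ-image of an intersection of two faces. -/
lemma chi_inter (hM : M.IsModel) (hLEM : IsLEM M) (w v : M.W) (a : Ag) :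
    a ∈ (SCof M).χ '' (SCface M w ∩ SCface M v) ↔ M.R a w v := by
  constructor
  · rintro ⟨u, ⟨⟨hw1, hw2⟩, hv1, hv2⟩, rfl⟩
    exact cell_eq' M hLEM hw1 hv1 (hw2 ▸ hv2 ▸ rfl)
  · intro h
    have hw := hM.2.2.1 a w v h
    have hv := R_mem_right M hM hLEM h
    refine ⟨⟨(a, {u | M.R a w u}), w, hw, rfl⟩, ⟨⟨hw, rfl⟩, hv, ?_⟩, rfl⟩
    exact cell_eq M hM hLEM h

lemma chi_ell (hM : M.IsModel) (hLEM : IsLEM M) (w : M.W) (p : Pr) (a : Ag) :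
    a ∈ (SCof M).χ '' (SCface M w ∩ (SCof M).ℓ p) ↔ a ∈ M.ρ p w := by
  constructor
  · rintro ⟨u, ⟨⟨hw1, hw2⟩, v, hv1, hv2⟩, rfl⟩
    have hv : u.1.1 ∈ M.δ v := hM.2.2.2 p v hv1
    have hRwv : M.R u.1.1 w v := cell_eq' M hLEM hw1 hv (hw2 ▸ hv2 ▸ rfl)
    exact hLEM.2.2.1 p u.1.1 v w hv1 (R_symm M hLEM hw1 hv hRwv)
  · intro h
    have hw : a ∈ M.δ w := hM.2.2.2 p w h
    exact ⟨⟨(a, {u | M.R a w u}), w, hw, rfl⟩, ⟨⟨hw, rfl⟩, w, h, rfl⟩, rfl⟩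

lemma SCface_mono (hM : M.IsModel) (hLEM : IsLEM M) {w v : M.W}
    (h : SCface M w ⊆ SCface M v) : SCface M v = SCface M w := by
  have key : ∀ a ∈ M.δ w, a ∈ M.δ v ∧ {u : M.W | M.R a w u} = {u : M.W | M.R a v u} := by
    intro a ha
    have hu : (⟨(a, {u | M.R a w u}), w, ha, rfl⟩ : SCVert M) ∈ SCface M v :=
      h ⟨ha, rfl⟩
    exact ⟨hu.1, hu.2⟩
  have hwv : ∀ a ∈ M.δ w, M.R a w v := by
    intro a ha
    exact cell_eq' M hLEM ha (key a ha).1 (key a ha).2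
  have hδ : M.δ v = M.δ w :=
    le_antisymm (hLEM.2.2.2 w v hwv) (fun a ha => (key a ha).1)
  ext u
  constructor
  · rintro ⟨hu1, hu2⟩
    have ha : u.1.1 ∈ M.δ w := hδ ▸ hu1
    exact ⟨ha, hu2.trans (key _ ha).2.symm⟩
  · rintro ⟨hu1, hu2⟩
    exact ⟨hδ ▸ hu1, hu2.trans (key _ hu1).2⟩

lemma SCface_nonempty (hM : M.IsModel) (w : M.W) : (SCface M w).Nonempty := by
  obtain ⟨a, ha⟩ := hM.2.1 w
  exact ⟨⟨(a, {v | M.R a w v}), w, ha, rfl⟩, ha, rfl⟩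

lemma SCface_face (hM : M.IsModel) (w : M.W) : SCface M w ∈ (SCof M).faces :=
  ⟨SCface_nonempty M hM w, w, subset_rfl⟩

lemma SC_facets (hM : M.IsModel) (hLEM : IsLEM M) :
    SimpModel.facets (SCof M) = {F : Set (SCVert M) | ∃ w : M.W, F = SCface M w} := by
  ext F
  constructor
  · rintro ⟨⟨hne, w, hFw⟩, hmax⟩
    exact ⟨w, hmax (SCface M w) (SCface_face M hM w) hFw⟩
  · rintro ⟨w, rfl⟩
    refine ⟨SCface_face M hM w, ?_⟩
    rintro G ⟨hGne, v, hGv⟩ hsub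
    have := SCface_mono M hM hLEM (hsub.trans hGv)
    exact le_antisymm hsub (hGv.trans this.le)

lemma SC_isModel (hM : M.IsModel) (hLEM : IsLEM M) : (SCof M).IsModel := by
  refine ⟨?_, ?_, ?_, ?_, ?_⟩
  · obtain ⟨w⟩ := hM.1
    obtain ⟨a, ha⟩ := hM.2.1 w
    exact ⟨⟨(a, {v | M.R a w v}), w, ha, rfl⟩⟩
  · rintro ⟨hne, -⟩
    exact Set.not_nonempty_empty hne
  · rintro Y F hYne hYF ⟨-, w, hFw⟩
    exact ⟨hYne, w, hYF.trans hFw⟩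
  · rintro v
    obtain ⟨w, hw1, hw2⟩ := v.2
    exact ⟨⟨v, rfl⟩, w, by rintro u rfl; exact ⟨hw1, hw2⟩⟩
  · rintro F ⟨-, w, hFw⟩ u hu u' hu' heq
    have h1 := hFw hu
    have h2 := hFw hu'
    apply Subtype.ext
    apply Prod.ext
    · exact heq
    · exact h1.2.trans (by rw [show u.1.1 = u'.1.1 from heq]; exact h2.2.symm)

lemma SC_truth [DecidableEq Xv] (hM : M.IsModel) (hLEM : IsLEM M)
    (φ : Formula Ag Xv Pr) :
    ∀ (w : M.W) (σ : Xv → Ag),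
      KSat M φ w σ ↔ SSat (SCof M) φ (SCface M w) σ := by
  induction φ with
  | atom p x =>
    intro w σ
    simp only [KSat, SSat]
    exact (chi_ell M hM hLEM w p (σ x)).symm
  | top => intro w σ; simp [KSat, SSat]
  | neg φ ih =>
    intro w σ
    simp only [KSat, SSat]
    exact not_congr (ih w σ)
  | and φ ψ ihφ ihψ =>
    intro w σ
    simp only [KSat, SSat]
    exact and_congr (ihφ w σ) (ihψ w σ)
  | assign x a φ ih =>
    intro w σ
    simp only [KSat, SSat]
    rw [chi_SCface M hLEM w]
    exact imp_congr Iff.rfl (ih w _)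
  | know Xs α ih =>
    intro w σ
    simp only [KSat, SSat]
    constructor
    · intro h G hG hcond
      rw [SC_facets M hM hLEM] at hG
      obtain ⟨v, rfl⟩ := hG
      refine (ih v σ).mp (h v fun x hx => ?_)
      exact (chi_inter M hM hLEM w v (σ x)).mp (hcond x hx)
    · intro h v hv
      refine (ih v σ).mpr (h (SCface M v) ?_ fun x hx => ?_)
      · rw [SC_facets M hM hLEM]; exact ⟨v, rfl⟩
      · exact (chi_inter M hM hLEM w v (σ x)).mpr (hv x hx)

end Aux

/-- `SC(M)` is a simplicial model whose facets are exactly the sets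
`F^M_w`, and truth is preserved. -/
theorem SC_spec
    {Ag Xv Pr : Type} [Fintype Ag] [Nonempty Ag] [DecidableEq Ag]
    [DecidableEq Xv] [Countable Xv] [Infinite Xv] [Countable Pr]
    (M : KModel Ag Pr) (hM : M.IsModel) (hLEM : IsLEM M) :
    (SCof M).IsModel ∧
      (SimpModel.facets (SCof M) = {F : Set (SCVert M) | ∃ w : M.W, F = SCface M w}) ∧
      ∀ (w : M.W) (α : Formula Ag Xv Pr), Formula.Sent α →
        ((∀ σ : Xv → Ag, KSat M α w σ) ↔
          (∀ σ : Xv → Ag, SSat (SCof M) α (SCface M w) σ)) := by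
  refine ⟨SC_isModel M hM hLEM, SC_facets M hM hLEM, fun w α _ => ?_⟩
  exact forall_congr' fun σ => SC_truth M hM hLEM α w σ

end SimplicialEpistemic
end
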